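/- Fix t ∈ ℕ. Let X be a measurable space, χ a probability measure on X, ν a nonzero finite measure on X, q : X × X → ℝ measurable with 0 < ε̲ ≤ q ≤ ε̄ < ∞, and g_0, …, g_t : X → ℝ measurable with 0 < δ̲ ≤ g_u ≤ δ̄ < ∞. Define the filter distributions recursively by φ_0(f) := ∫ f g_0 dχ / ∫ g_0 dχ and φ_{u+1}(f) := [∬ f(x') g_{u+1}(x') q(x,x') ν(dx') φ_u(dx)] / [∬ g_{u+1}(x') q(x,x') ν(dx') φ_u(dx)] for 0 ≤ u ≤ t−1. Define the joint smoothing functional on bounded measurable f : X^{t+1} → ℝ by φ_{0:t|t}(f) := Z^{−1} ∫⋯∫ f(x_0, …, x_t) g_0(x_0) Π_{u=1}^{t} [q(x_{u−1}, x_u) g_u(x_u)] χ(dx_0) ν(dx_1) ⋯ ν(dx_t), where Z is the same iterated integral with f ≡ 1. Then the backward decomposition holds: φ_{0:t|t}(f) = ∫ φ_t(dx_t) ∫ B_{φ_{t−1}}(x_t, dx_{t−1}) ⋯ ∫ B_{φ_0}(x_1, dx_0) f(x_0, …, x_t), where B_μ(y, dx) := q(x, y) μ(dx) / ∫ q(x',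 y) μ(dx') is the backward kernel associated with a probability measure μ. -/

import Mathlib

set_option linter.unusedSectionVars false
set_option linter.unusedVariables false


open MeasureTheory

noncomputable section

variable {X : Type*} [MeasurableSpace X]

/-- The base measure `χ(dx_0) ν(dx_1) ⋯ ν(dx_t)` on paths `(x_0, …, x_t)`. -/
def baseMeas (t : ℕ) (χ ν : Measure X) : Measure (Fin (t + 1) → X) :=
  Measure.pi (fun i => if i = 0 then χ else ν)

/-- The unnormalised joint smoothing density
`g_0(x_0) Π_{u=1}^{t} [q(x_{u−1}, x_u) g_u(x_u)]`. -/
def jointDens (t : ℕ) (q : X → X → ℝ) (g : ℕ → X → ℝ) : (Fin (t + 1) → X) → ℝ :=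
  fun x => g 0 (x 0) * ∏ i : Fin t, (q (x i.castSucc) (x i.succ) * g (i.1 + 1) (x i.succ))

/-- The filter functionals: `φ_0(f) = ∫ f g_0 dχ / ∫ g_0 dχ` and
`φ_{u+1}(f) = [∬ f(x') g_{u+1}(x') q(x,x') ν(dx') φ_u(dx)]
            / [∬ g_{u+1}(x') q(x,x') ν(dx') φ_u(dx)]`. -/
def filt0 (χ ν : Measure X) (q : X → X → ℝ) (g : ℕ → X → ℝ) : ℕ → (X → ℝ) → ℝ
  | 0 => fun f => (∫ x, f x * g 0 x ∂χ) / ∫ x, g 0 x ∂χ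
  | u + 1 => fun f =>
      filt0 χ ν q g u (fun x => ∫ x', f x' * (g (u + 1) x' * q x x') ∂ν) /
        filt0 χ ν q g u (fun x => ∫ x', g (u + 1) x' * q x x' ∂ν)

open Fin.NatCast in
/-- Iterated backward-kernel integrals: `Jfun t q Phi f u` is the function obtained
from `f(x_0, …, x_t)` by integrating out the coordinates `x_0, …, x_{u−1}` with the
backward kernels, i.e. `Jfun 0 = f` and
`Jfun (u+1) (x) = ∫ Jfun u (x[x_u := z]) B_{φ_u}(x_{u+1}, dz)
               = φ_u(z ↦ Jfun u (x[x_u := z]) q(z, x_{u+1})) / φ_u(z ↦ q(z, x_{u+1}))`. -/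
def Jfun (t : ℕ) (q : X → X → ℝ) (Phi : ℕ → (X → ℝ) → ℝ)
    (f : (Fin (t + 1) → X) → ℝ) : ℕ → (Fin (t + 1) → X) → ℝ
  | 0 => f
  | u + 1 => fun x =>
      Phi u (fun z =>
          Jfun t q Phi f u (Function.update x ((u : ℕ) : Fin (t + 1)) z) *
            q z (x ((u + 1 : ℕ) : Fin (t + 1)))) /
        Phi u (fun z => q z (x ((u + 1 : ℕ) : Fin (t + 1))))

open Fin.NatCast

lemma integrable_of_bdd {α : Type*} [MeasurableSpace α] {μ : Measure α} [IsFiniteMeasure μ]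
    {F : α → ℝ} {c : ℝ} (hF : Measurable F) (h : ∀ a, |F a| ≤ c) : Integrable F μ :=
  ⟨hF.aestronglyMeasurable,
    HasFiniteIntegral.of_bounded (C := c) (ae_of_all _ fun a => by
      simpa [Real.norm_eq_abs] using h a)⟩

lemma meas_param {α β : Type*} [MeasurableSpace α] [MeasurableSpace β] (ν : Measure β)
    [SFinite ν] {f : α × β → ℝ} (hf : Measurable f) :
    Measurable fun x => ∫ y, f (x, y) ∂ν :=
  hf.stronglyMeasurable.integral_prod_right'.measurable

lemma meas_param' {α β : Type*} [MeasurableSpace α] [MeasurableSpace β] (μ : Measure α)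
    [SFinite μ] {f : α × β → ℝ} (hf : Measurable f) :
    Measurable fun y => ∫ x, f (x, y) ∂μ :=
  hf.stronglyMeasurable.integral_prod_left'.measurable

lemma abs_mul_le' {a b A B : ℝ} (h1 : |a| ≤ A) (h2 : |b| ≤ B) : |a * b| ≤ A * B := by
  rw [abs_mul]
  exact mul_le_mul h1 h2 (abs_nonneg _) ((abs_nonneg a).trans h1)

lemma div_div_same' (a b c : ℝ) (hc : c ≠ 0) : a / c / (b / c) = a / b := by
  rcases eq_or_ne b 0 with rb | rb
  · simp [rb]
  · field_simp

def insF {X : Type*} (n : ℕ) (i : Fin (n + 1)) : X × (Fin n → X) → (Fin (n + 1) → X) :=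
  fun p => i.insertNth p.1 p.2

lemma insF_apply {X : Type*} (n : ℕ) (i : Fin (n + 1)) (p : X × (Fin n → X)) :
    insF n i p = i.insertNth p.1 p.2 := rfl

lemma integral_update_pi {n : ℕ} (μ : Fin (n + 1) → Measure X) [∀ i, IsFiniteMeasure (μ i)]
    (i : Fin (n + 1)) {G : (Fin (n + 1) → X) → ℝ} {c : ℝ}
    (hG : Measurable G) (hGb : ∀ x, |G x| ≤ c) :
    ∫ x, (∫ z, G (Function.update x i z) ∂(μ i)) ∂(Measure.pi μ)
      = ((μ i) Set.univ).toReal * ∫ x, G x ∂(Measure.pi μ) := by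
  classical
  set ρ := (μ i).prod (Measure.pi fun j => μ (i.succAbove j)) with hρ
  have mp := measurePreserving_piFinSuccAbove μ i
  set e := MeasurableEquiv.piFinSuccAbove (fun _ : Fin (n + 1) => X) i with he
  set ins : X × (Fin n → X) → (Fin (n + 1) → X) := insF n i with hins0
  have hins : ins = ⇑e.symm := by
    funext p; simp [hins0, insF_apply, he, MeasurableEquiv.piFinSuccAbove, Fin.insertNthEquiv]
  have hinsm : Measurable ins := by
    rw [hins]; exact e.symm.measurable
  have hcomp : ∀ (H : (Fin (n + 1) → X) → ℝ), Measurable H →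
      ∫ x, H x ∂(Measure.pi μ) = ∫ p : X × (Fin n → X), H (ins p) ∂ρ := by
    intro H _
    calc ∫ x, H x ∂(Measure.pi μ) = ∫ x, (fun p : X × (Fin n → X) => H (ins p)) (e x) ∂(Measure.pi μ) := by
          congr 1; funext x
          rw [hins]; simp
      _ = ∫ p : X × (Fin n → X), H (ins p) ∂ρ := by
          rw [hρ]
          exact mp.integral_comp e.measurableEmbedding (fun p : X × (Fin n → X) => H (ins p))
  have hGmN : Measurable fun p : X × (Fin n → X) => G (ins p) := hG.comp hinsm
  have hint : Integrable (fun p : X × (Fin n → X) => G (ins p)) ρ :=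
    integrable_of_bdd hGmN fun p => hGb _
  have hK : Measurable fun y : Fin n → X => ∫ z, G (ins (z, y)) ∂(μ i) :=
    meas_param' (μ i) (f := fun p : X × (Fin n → X) => G (ins p))
      (hG.comp hinsm)
  have hKb : ∀ y, |∫ z, G (ins (z, y)) ∂(μ i)| ≤ c * ((μ i) Set.univ).toReal := by
    intro y
    have := norm_integral_le_of_norm_le_const (μ := μ i)
      (f := fun z => G (ins (z, y))) (C := c) (ae_of_all _ fun z => by
        simpa [Real.norm_eq_abs] using hGb _)
    simpa [Real.norm_eq_abs, measureReal_def] using this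
  have hinner : Measurable fun x : Fin (n+1) → X => ∫ z, G (Function.update x i z) ∂(μ i) :=
    meas_param (μ i) (f := fun p : (Fin (n+1) → X) × X => G (Function.update p.1 i p.2))
      (hG.comp measurable_update')
  rw [hcomp _ hinner]
  have h1 : ∫ p : X × (Fin n → X), (∫ z, G (Function.update (ins p) i z) ∂(μ i)) ∂ρ
      = ∫ p : X × (Fin n → X), (∫ z, G (ins (z, p.2)) ∂(μ i)) ∂ρ := by
    congr 1; funext p
    congr 1; funext z
    simp only [hins0, insF_apply]; rw [Fin.update_insertNth]
  rw [h1]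
  have h2 : ∫ p : X × (Fin n → X), (∫ z, G (ins (z, p.2)) ∂(μ i)) ∂ρ
      = ((μ i) Set.univ).toReal * ∫ y, (∫ z, G (ins (z, y)) ∂(μ i)) ∂(Measure.pi fun j => μ (i.succAbove j)) := by
    have hint2 : Integrable (fun p : X × (Fin n → X) => ∫ z, G (ins (z, p.2)) ∂(μ i)) ρ :=
      integrable_of_bdd (by exact hK.comp measurable_snd) (fun p => hKb p.2)
    rw [hρ] at hint2 ⊢
    rw [integral_prod _ hint2]
    simp [integral_const, smul_eq_mul, measureReal_def]
  rw [h2]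
  congr 1
  rw [hcomp G hG, hρ, integral_prod _ hint]
  exact (integral_integral_swap (by exact hint)).symm

lemma integral_apply_pi {n : ℕ} (μ : Fin (n + 1) → Measure X) [∀ i, IsFiniteMeasure (μ i)]
    (i : Fin (n + 1)) {F : X → ℝ} {c : ℝ} (hF : Measurable F) (hFb : ∀ z, |F z| ≤ c) :
    ((μ i) Set.univ).toReal * ∫ x, F (x i) ∂(Measure.pi μ)
      = ((Measure.pi μ) Set.univ).toReal * ∫ z, F z ∂(μ i) := by
  have h := integral_update_pi μ i (G := fun x => F (x i))
    (hF.comp (measurable_pi_apply i)) (fun x => hFb _)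
  simp only [Function.update_self] at h
  rw [integral_const, smul_eq_mul, measureReal_def] at h
  rw [← h]

structure Hyp (χ ν : Measure X) (q : X → X → ℝ) (εlo εhi : ℝ) (g : ℕ → X → ℝ)
    (δlo δhi : ℝ) : Prop where
  hν : ν ≠ 0
  hq : Measurable (Function.uncurry q)
  hεlo : 0 < εlo
  hqb : ∀ x x', q x x' ∈ Set.Icc εlo εhi
  hg : ∀ u, Measurable (g u)
  hδlo : 0 < δlo
  hgb : ∀ u x, g u x ∈ Set.Icc δlo δhi

variable {χ ν : Measure X} {q : X → X → ℝ} {εlo εhi : ℝ} {g : ℕ → X → ℝ} {δlo δhi : ℝ}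

def mm (χ ν : Measure X) : ℕ → Measure X := fun u => if u = 0 then χ else ν

instance [IsProbabilityMeasure χ] [IsFiniteMeasure ν] (u : ℕ) :
    IsFiniteMeasure (mm χ ν u) := by
  unfold mm; split <;> infer_instance

section HypFacts

variable [IsProbabilityMeasure χ] [IsFiniteMeasure ν]
variable (H : Hyp χ ν q εlo εhi g δlo δhi)
include H

lemma Hyp.nonemptyX : Nonempty X := by
  by_contra h
  have : IsEmpty X := not_nonempty_iff.1 h
  exact H.hν (Measure.eq_zero_of_isEmpty ν)

lemma Hyp.mm_ne (u : ℕ) : mm χ ν u ≠ 0 := by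
  unfold mm; split
  · exact IsProbabilityMeasure.ne_zero χ
  · exact H.hν

lemma Hyp.mass_pos (u : ℕ) : 0 < ((mm χ ν u) Set.univ).toReal :=
  ENNReal.toReal_pos (Measure.measure_univ_ne_zero.2 (H.mm_ne u)) (measure_ne_top _ _)

lemma Hyp.qabs (x x' : X) : |q x x'| ≤ εhi := by
  have h := H.hqb x x'
  rw [abs_of_pos (lt_of_lt_of_le H.hεlo h.1)]; exact h.2

lemma Hyp.gabs (u : ℕ) (x : X) : |g u x| ≤ δhi := by
  have h := H.hgb u x
  rw [abs_of_pos (lt_of_lt_of_le H.hδlo h.1)]; exact h.2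

end HypFacts

def kk (χ ν : Measure X) (q : X → X → ℝ) (g : ℕ → X → ℝ)
    [IsProbabilityMeasure χ] [IsFiniteMeasure ν] : ℕ → X → ℝ
  | 0 => g 0
  | u + 1 => fun y => g (u + 1) y * ∫ z, kk χ ν q g u z * q z y ∂(mm χ ν u)

section HypFacts2

variable [IsProbabilityMeasure χ] [IsFiniteMeasure ν]
variable (H : Hyp χ ν q εlo εhi g δlo δhi)
include H

lemma Hyp.kk_prop : ∀ u : ℕ, Measurable (kk χ ν q g u) ∧
    ∃ a b : ℝ, 0 < a ∧ ∀ z, a ≤ kk χ ν q g u z ∧ kk χ ν q g u z ≤ b := by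
  intro u
  induction u with
  | zero =>
    exact ⟨H.hg 0, δlo, δhi, H.hδlo, fun z => ⟨(H.hgb 0 z).1, (H.hgb 0 z).2⟩⟩
  | succ u ih =>
    obtain ⟨hm, a, b, ha, hab⟩ := ih
    obtain ⟨z0⟩ := H.nonemptyX
    have hb : 0 < b := lt_of_lt_of_le ha ((hab z0).1.trans (hab z0).2)
    have hkabs : ∀ z, |kk χ ν q g u z| ≤ b := fun z => by
      rw [abs_of_pos (lt_of_lt_of_le ha (hab z).1)]; exact (hab z).2
    set m := mm χ ν u with hmm
    have hIm : ∀ y : X, Measurable (fun z => kk χ ν q g u z * q z y) := fun y =>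
      hm.mul (H.hq.comp (measurable_id.prodMk measurable_const))
    have hint : ∀ y, Integrable (fun z => kk χ ν q g u z * q z y) m := fun y =>
      integrable_of_bdd (hIm y) (fun z => abs_mul_le' (hkabs z) (H.qabs z y))
    have hlo : ∀ y, ((m Set.univ).toReal) * (a * εlo) ≤ ∫ z, kk χ ν q g u z * q z y ∂m := by
      intro y
      calc ((m Set.univ).toReal) * (a * εlo) = ∫ _, a * εlo ∂m := by
            rw [integral_const, smul_eq_mul, measureReal_def]
        _ ≤ ∫ z, kk χ ν q g u z * q z y ∂m := by
            refine integral_mono (integrable_const _) (hint y) fun z => ?_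
            exact mul_le_mul (hab z).1 (H.hqb z y).1 (le_of_lt H.hεlo)
              ((le_of_lt ha).trans (hab z).1)
    have hhi : ∀ y, ∫ z, kk χ ν q g u z * q z y ∂m ≤ ((m Set.univ).toReal) * (b * εhi) := by
      intro y
      calc ∫ z, kk χ ν q g u z * q z y ∂m ≤ ∫ _, b * εhi ∂m := by
            refine integral_mono (hint y) (integrable_const _) fun z => ?_
            exact mul_le_mul (hab z).2 (H.hqb z y).2
              ((le_of_lt H.hεlo).trans (H.hqb z y).1) (le_of_lt hb)
        _ = ((m Set.univ).toReal) * (b * εhi) := by rw [integral_const, smul_eq_mul, measureReal_def]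
    have hIpos : 0 < ((m Set.univ).toReal) * (a * εlo) :=
      mul_pos (H.mass_pos u) (mul_pos ha H.hεlo)
    have hk1 : kk χ ν q g (u + 1) = fun y => g (u + 1) y * ∫ z, kk χ ν q g u z * q z y ∂m := rfl
    constructor
    · rw [hk1]
      exact (H.hg (u + 1)).mul (meas_param' m
        (f := fun p : X × X => kk χ ν q g u p.1 * q p.1 p.2)
        ((hm.comp measurable_fst).mul H.hq))
    · refine ⟨δlo * (((m Set.univ).toReal) * (a * εlo)),
        δhi * (((m Set.univ).toReal) * (b * εhi)), mul_pos H.hδlo hIpos, fun z => ?_⟩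
      rw [hk1]
      constructor
      · exact mul_le_mul (H.hgb (u + 1) z).1 (hlo z) (le_of_lt hIpos)
          ((le_of_lt H.hδlo).trans (H.hgb (u + 1) z).1)
      · exact mul_le_mul (H.hgb (u + 1) z).2 (hhi z)
          ((le_of_lt hIpos).trans (hlo z)) ((le_of_lt H.hδlo).trans ((H.hgb (u+1) z).1.trans (H.hgb (u+1) z).2))

lemma Hyp.kk_meas (u : ℕ) : Measurable (kk χ ν q g u) := (H.kk_prop u).1

lemma Hyp.kk_int_pos (u : ℕ) : 0 < ∫ z, kk χ ν q g u z ∂(mm χ ν u) := by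
  obtain ⟨hm, a, b, ha, hab⟩ := H.kk_prop u
  have hkabs : ∀ z, |kk χ ν q g u z| ≤ b := fun z => by
    rw [abs_of_pos (lt_of_lt_of_le ha (hab z).1)]; exact (hab z).2
  calc (0:ℝ) < ((mm χ ν u Set.univ).toReal) * a := mul_pos (H.mass_pos u) ha
    _ = ∫ _, a ∂(mm χ ν u) := by rw [integral_const, smul_eq_mul, measureReal_def]
    _ ≤ ∫ z, kk χ ν q g u z ∂(mm χ ν u) :=
        integral_mono (integrable_const _) (integrable_of_bdd hm hkabs) fun z => (hab z).1

end HypFacts2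

section HypFacts3

variable [IsProbabilityMeasure χ] [IsFiniteMeasure ν]
variable (H : Hyp χ ν q εlo εhi g δlo δhi)
include H

lemma Hyp.fub (u : ℕ) {h : X → ℝ} {c : ℝ} (hh : Measurable h) (hhb : ∀ x, |h x| ≤ c) :
    ∫ x, (∫ x', h x' * (g (u + 1) x' * q x x') ∂ν) * kk χ ν q g u x ∂(mm χ ν u)
      = ∫ x', h x' * kk χ ν q g (u + 1) x' ∂ν := by
  obtain ⟨hm, a, b, ha, hab⟩ := H.kk_prop u
  have hkabs : ∀ z, |kk χ ν q g u z| ≤ b := fun z => by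
    rw [abs_of_pos (lt_of_lt_of_le ha (hab z).1)]; exact (hab z).2
  set m := mm χ ν u with hmm
  -- pull the constant into the inner integral
  have step1 : ∀ x : X, (∫ x', h x' * (g (u + 1) x' * q x x') ∂ν) * kk χ ν q g u x
      = ∫ x', h x' * (g (u + 1) x' * q x x') * kk χ ν q g u x ∂ν := by
    intro x
    rw [integral_mul_const]
  simp_rw [step1]
  -- swap the two integrals
  have hswap : Integrable (Function.uncurry fun x x' =>
      h x' * (g (u + 1) x' * q x x') * kk χ ν q g u x) (m.prod ν) := by
    apply integrable_of_bdd (c := c * (δhi * εhi) * b)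
    · apply Measurable.mul
      · exact ((hh.comp measurable_snd).mul
          (((H.hg (u+1)).comp measurable_snd).mul H.hq))
      · exact hm.comp measurable_fst
    · rintro ⟨x, x'⟩
      exact abs_mul_le' (abs_mul_le' (hhb x') (abs_mul_le' (H.gabs _ _) (H.qabs _ _)))
        (hkabs x)
  rw [integral_integral_swap hswap]
  -- compute the inner integral
  have inner : ∀ x' : X, ∫ x, h x' * (g (u + 1) x' * q x x') * kk χ ν q g u x ∂m
      = h x' * kk χ ν q g (u + 1) x' := by
    intro x'
    calc ∫ x, h x' * (g (u + 1) x' * q x x') * kk χ ν q g u x ∂m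
        = ∫ x, (h x' * g (u + 1) x') * (kk χ ν q g u x * q x x') ∂m := by
          congr 1; funext x; ring
      _ = (h x' * g (u + 1) x') * ∫ x, kk χ ν q g u x * q x x' ∂m := by
          rw [integral_const_mul]
      _ = h x' * kk χ ν q g (u + 1) x' := by
          have : kk χ ν q g (u+1) x' = g (u + 1) x' * ∫ x, kk χ ν q g u x * q x x' ∂m := rfl
          rw [this]; ring
  simp_rw [inner]

lemma Hyp.filt_repr : ∀ (u : ℕ) (h : X → ℝ), Measurable h → (∃ c, ∀ x, |h x| ≤ c) →
    filt0 χ ν q g u h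
      = (∫ z, h z * kk χ ν q g u z ∂(mm χ ν u)) / ∫ z, kk χ ν q g u z ∂(mm χ ν u) := by
  intro u
  induction u with
  | zero =>
    intro h _ _
    simp only [filt0, kk, mm, if_pos]
  | succ u ih =>
    rintro h hh ⟨c, hc⟩
    have hq2 : ∀ x' : X, Measurable fun x : X => q x x' := fun x' =>
      H.hq.comp (measurable_id.prodMk measurable_const)
    have hHm : ∀ (h0 : X → ℝ), Measurable h0 →
        Measurable fun x : X => ∫ x', h0 x' * (g (u + 1) x' * q x x') ∂ν := by
      intro h0 hh0
      exact meas_param ν (f := fun p : X × X =>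
        h0 p.2 * (g (u + 1) p.2 * q p.1 p.2))
        ((hh0.comp measurable_snd).mul
          (((H.hg (u+1)).comp measurable_snd).mul H.hq))
    have hHb : ∀ (h0 : X → ℝ) (c0 : ℝ), (∀ x, |h0 x| ≤ c0) →
        ∀ x, |∫ x', h0 x' * (g (u + 1) x' * q x x') ∂ν| ≤ c0 * (δhi * εhi) * (ν Set.univ).toReal := by
      intro h0 c0 hc0 x
      have := norm_integral_le_of_norm_le_const (μ := ν)
        (f := fun x' => h0 x' * (g (u + 1) x' * q x x')) (C := c0 * (δhi * εhi))
        (ae_of_all _ fun x' => by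
          rw [Real.norm_eq_abs]
          exact abs_mul_le' (hc0 x') (abs_mul_le' (H.gabs _ _) (H.qabs _ _)))
      simpa [Real.norm_eq_abs, measureReal_def] using this
    have hone : ∀ x : X, |(1:ℝ)| ≤ 1 := fun x => by norm_num
    have hde : (fun x : X => ∫ x', g (u + 1) x' * q x x' ∂ν)
        = fun x : X => ∫ x', (1:ℝ) * (g (u + 1) x' * q x x') ∂ν := by
      funext x; simp
    have hDne : (∫ z, kk χ ν q g u z ∂(mm χ ν u)) ≠ 0 := ne_of_gt (H.kk_int_pos u)
    have hmm1 : mm χ ν (u + 1) = ν := if_neg (Nat.succ_ne_zero u)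
    calc filt0 χ ν q g (u+1) h
        = filt0 χ ν q g u (fun x => ∫ x', h x' * (g (u + 1) x' * q x x') ∂ν) /
          filt0 χ ν q g u (fun x => ∫ x', g (u + 1) x' * q x x' ∂ν) := by
          simp only [filt0]
      _ = (∫ x, (∫ x', h x' * (g (u + 1) x' * q x x') ∂ν) * kk χ ν q g u x ∂(mm χ ν u)) /
          (∫ x, (∫ x', (1:ℝ) * (g (u + 1) x' * q x x') ∂ν) * kk χ ν q g u x ∂(mm χ ν u)) := by
          rw [ih _ (hHm h hh) ⟨_, hHb h c hc⟩, hde,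
            ih _ (hHm (fun _ => (1:ℝ)) measurable_const) ⟨_, hHb (fun _ => 1) 1 hone⟩,
            div_div_same' _ _ _ hDne]
      _ = (∫ x', h x' * kk χ ν q g (u + 1) x' ∂ν) /
          (∫ x', (1:ℝ) * kk χ ν q g (u + 1) x' ∂ν) := by
          rw [H.fub u hh hc, H.fub u measurable_const hone]
      _ = (∫ z, h z * kk χ ν q g (u+1) z ∂(mm χ ν (u+1))) /
          ∫ z, kk χ ν q g (u+1) z ∂(mm χ ν (u+1)) := by
          rw [hmm1]; simp

end HypFacts3

lemma Jfun_congr (t : ℕ) (q : X → X → ℝ) (Phi : ℕ → (X → ℝ) → ℝ)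
    (f : (Fin (t + 1) → X) → ℝ) :
    ∀ u, u ≤ t → ∀ x y : Fin (t + 1) → X,
      (∀ j : Fin (t + 1), u ≤ (j : ℕ) → x j = y j) →
      Jfun t q Phi f u x = Jfun t q Phi f u y := by
  intro u
  induction u with
  | zero =>
    intro _ x y hxy
    have : x = y := funext fun j => hxy j (Nat.zero_le _)
    rw [this]
  | succ u ih =>
    intro hu x y hxy
    have hvu : ((u : ℕ) : Fin (t + 1)).1 = u := Fin.val_cast_of_lt (by omega)
    have hvu1 : ((u + 1 : ℕ) : Fin (t + 1)).1 = u + 1 := Fin.val_cast_of_lt (by omega)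
    have e1 : x ((u + 1 : ℕ) : Fin (t + 1)) = y ((u + 1 : ℕ) : Fin (t + 1)) :=
      hxy _ (by omega)
    have e2 : ∀ z, Jfun t q Phi f u (Function.update x ((u : ℕ) : Fin (t + 1)) z)
        = Jfun t q Phi f u (Function.update y ((u : ℕ) : Fin (t + 1)) z) := by
      intro z
      refine ih (by omega) _ _ fun j hj => ?_
      by_cases hju : j = ((u : ℕ) : Fin (t + 1))
      · rw [hju]; simp
      · rw [Function.update_of_ne hju, Function.update_of_ne hju]
        refine hxy j ?_
        have : (j : ℕ) ≠ u := fun hc => hju (Fin.ext (by rw [hvu, hc]))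
        omega
    simp only [Jfun]
    rw [e1]
    congr 1
    congr 1
    funext z
    rw [e2 z]

section Jpart

variable [IsProbabilityMeasure χ] [IsFiniteMeasure ν]
variable (H : Hyp χ ν q εlo εhi g δlo δhi)
include H

lemma Hyp.qkk_pos (u : ℕ) (y : X) : 0 < ∫ z, q z y * kk χ ν q g u z ∂(mm χ ν u) := by
  obtain ⟨hm, a, b, ha, hab⟩ := H.kk_prop u
  have hkabs : ∀ z, |kk χ ν q g u z| ≤ b := fun z => by
    rw [abs_of_pos (lt_of_lt_of_le ha (hab z).1)]; exact (hab z).2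
  have hmeas : Measurable fun z => q z y * kk χ ν q g u z :=
    (H.hq.comp (measurable_id.prodMk measurable_const)).mul hm
  calc (0:ℝ) < ((mm χ ν u Set.univ).toReal) * (εlo * a) :=
        mul_pos (H.mass_pos u) (mul_pos H.hεlo ha)
    _ = ∫ _, εlo * a ∂(mm χ ν u) := by rw [integral_const, smul_eq_mul, measureReal_def]
    _ ≤ ∫ z, q z y * kk χ ν q g u z ∂(mm χ ν u) := by
        refine integral_mono (integrable_const _)
          (integrable_of_bdd hmeas fun z => abs_mul_le' (H.qabs z y) (hkabs z)) fun z => ?_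
        exact mul_le_mul (H.hqb z y).1 (hab z).1 (le_of_lt ha) ((le_of_lt H.hεlo).trans (H.hqb z y).1)

lemma Hyp.J_succ_repr (t : ℕ) (f : (Fin (t + 1) → X) → ℝ) (u : ℕ) {C : ℝ}
    (hm : Measurable (Jfun t q (filt0 χ ν q g) f u))
    (hb : ∀ x, |Jfun t q (filt0 χ ν q g) f u x| ≤ C) :
    Jfun t q (filt0 χ ν q g) f (u + 1) = fun x =>
      (∫ z, Jfun t q (filt0 χ ν q g) f u (Function.update x ((u : ℕ) : Fin (t + 1)) z) *
          q z (x ((u + 1 : ℕ) : Fin (t + 1))) * kk χ ν q g u z ∂(mm χ ν u)) /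
        ∫ z, q z (x ((u + 1 : ℕ) : Fin (t + 1))) * kk χ ν q g u z ∂(mm χ ν u) := by
  funext x
  have measA : Measurable fun z =>
      Jfun t q (filt0 χ ν q g) f u (Function.update x ((u : ℕ) : Fin (t + 1)) z) *
        q z (x ((u + 1 : ℕ) : Fin (t + 1))) :=
    (hm.comp (measurable_update x)).mul
      (H.hq.comp (measurable_id.prodMk measurable_const))
  have measB : Measurable fun z => q z (x ((u + 1 : ℕ) : Fin (t + 1))) :=
    H.hq.comp (measurable_id.prodMk measurable_const)
  have boundA : ∀ z, |Jfun t q (filt0 χ ν q g) f u (Function.update x ((u : ℕ) : Fin (t + 1)) z) *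
      q z (x ((u + 1 : ℕ) : Fin (t + 1)))| ≤ C * εhi :=
    fun z => abs_mul_le' (hb _) (H.qabs _ _)
  simp only [Jfun]
  rw [H.filt_repr u _ measA ⟨_, boundA⟩, H.filt_repr u _ measB ⟨εhi, fun z => H.qabs _ _⟩,
    div_div_same' _ _ _ (ne_of_gt (H.kk_int_pos u))]

lemma Hyp.J_prop (t : ℕ) (f : (Fin (t + 1) → X) → ℝ) (hf : Measurable f) {C : ℝ}
    (hC : ∀ x, |f x| ≤ C) :
    ∀ u, Measurable (Jfun t q (filt0 χ ν q g) f u) ∧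
      ∀ x, |Jfun t q (filt0 χ ν q g) f u x| ≤ C := by
  intro u
  induction u with
  | zero => exact ⟨hf, hC⟩
  | succ u ih =>
    obtain ⟨hm, hb⟩ := ih
    obtain ⟨hkm, a, b, ha, hab⟩ := H.kk_prop u
    have hkabs : ∀ z, |kk χ ν q g u z| ≤ b := fun z => by
      rw [abs_of_pos (lt_of_lt_of_le ha (hab z).1)]; exact (hab z).2
    have hC0 : 0 ≤ C := by
      obtain ⟨x0⟩ := H.nonemptyX
      exact (abs_nonneg _).trans (hb (fun _ => x0))
    rw [H.J_succ_repr t f u hm hb]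
    have measN : Measurable fun x : Fin (t + 1) → X =>
        ∫ z, Jfun t q (filt0 χ ν q g) f u (Function.update x ((u : ℕ) : Fin (t + 1)) z) *
          q z (x ((u + 1 : ℕ) : Fin (t + 1))) * kk χ ν q g u z ∂(mm χ ν u) := by
      apply meas_param (mm χ ν u) (f := fun p : (Fin (t + 1) → X) × X =>
        Jfun t q (filt0 χ ν q g) f u (Function.update p.1 ((u : ℕ) : Fin (t + 1)) p.2) *
          q p.2 (p.1 ((u + 1 : ℕ) : Fin (t + 1))) * kk χ ν q g u p.2)
      exact ((hm.comp measurable_update').mul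
        (H.hq.comp (measurable_snd.prodMk
          ((measurable_pi_apply _).comp measurable_fst)))).mul (hkm.comp measurable_snd)
    have measD : Measurable fun x : Fin (t + 1) → X =>
        ∫ z, q z (x ((u + 1 : ℕ) : Fin (t + 1))) * kk χ ν q g u z ∂(mm χ ν u) := by
      apply meas_param (mm χ ν u) (f := fun p : (Fin (t + 1) → X) × X =>
        q p.2 (p.1 ((u + 1 : ℕ) : Fin (t + 1))) * kk χ ν q g u p.2)
      exact (H.hq.comp (measurable_snd.prodMk
        ((measurable_pi_apply _).comp measurable_fst))).mul (hkm.comp measurable_snd)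
    refine ⟨measN.div measD, fun x => ?_⟩
    set y := x ((u + 1 : ℕ) : Fin (t + 1)) with hy
    have hDpos := H.qkk_pos u y
    have hNle : |∫ z, Jfun t q (filt0 χ ν q g) f u (Function.update x ((u : ℕ) : Fin (t + 1)) z) *
        q z y * kk χ ν q g u z ∂(mm χ ν u)| ≤ C * ∫ z, q z y * kk χ ν q g u z ∂(mm χ ν u) := by
      refine le_trans (by
        simpa only [Real.norm_eq_abs] using
          norm_integral_le_integral_norm (μ := mm χ ν u)
            (f := fun z => Jfun t q (filt0 χ ν q g) f u
              (Function.update x ((u : ℕ) : Fin (t + 1)) z) * q z y * kk χ ν q g u z)) ?_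
      rw [← integral_const_mul]
      refine integral_mono ?_ ?_ fun z => ?_
      · refine (integrable_of_bdd (c := C * εhi * b) ?_ ?_).abs
        · exact ((hm.comp (measurable_update x)).mul
            (H.hq.comp (measurable_id.prodMk measurable_const))).mul hkm
        · exact fun z => abs_mul_le' (abs_mul_le' (hb _) (H.qabs _ _)) (hkabs z)
      · exact (integrable_of_bdd ((H.hq.comp (measurable_id.prodMk measurable_const)).mul hkm)
          (fun z => abs_mul_le' (H.qabs z y) (hkabs z))).const_mul C
      · have hqpos : 0 < q z y := lt_of_lt_of_le H.hεlo (H.hqb z y).1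
        have hkpos : 0 < kk χ ν q g u z := lt_of_lt_of_le ha (hab z).1
        calc |Jfun t q (filt0 χ ν q g) f u (Function.update x ((u : ℕ) : Fin (t + 1)) z) *
              q z y * kk χ ν q g u z|
            = |Jfun t q (filt0 χ ν q g) f u (Function.update x ((u : ℕ) : Fin (t + 1)) z)| *
              (q z y * kk χ ν q g u z) := by
              rw [abs_mul, abs_mul, abs_of_pos hqpos, abs_of_pos hkpos, mul_assoc]
          _ ≤ C * (q z y * kk χ ν q g u z) :=
              mul_le_mul_of_nonneg_right (hb _) (le_of_lt (mul_pos hqpos hkpos))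
    rw [abs_div, abs_of_pos hDpos, div_le_iff₀ hDpos]
    exact hNle

lemma Hyp.J_one (t : ℕ) :
    ∀ u, u ≤ t → Jfun t q (filt0 χ ν q g) (fun _ => (1 : ℝ)) u = fun _ => 1 := by
  intro u
  induction u with
  | zero => intro _; rfl
  | succ u ih =>
    intro hu
    funext x
    have measB : Measurable fun z => q z (x ((u + 1 : ℕ) : Fin (t + 1))) :=
      H.hq.comp (measurable_id.prodMk measurable_const)
    have hne : filt0 χ ν q g u (fun z => q z (x ((u + 1 : ℕ) : Fin (t + 1)))) ≠ 0 := by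
      rw [H.filt_repr u _ measB ⟨εhi, fun z => H.qabs _ _⟩]
      exact ne_of_gt (div_pos (H.qkk_pos u _) (H.kk_int_pos u))
    simp only [Jfun, ih (by omega), one_mul]
    exact div_self hne

end Jpart

lemma abs_prod_le {ι : Type*} (s : Finset ι) (F : ι → ℝ) (E : ℝ) (n : ℕ)
    (h : ∀ i ∈ s, |F i| ≤ E) (hcard : s.card ≤ n) :
    |∏ i ∈ s, F i| ≤ (max 1 E) ^ n := by
  calc |∏ i ∈ s, F i| = ∏ i ∈ s, |F i| := Finset.abs_prod s F
    _ ≤ ∏ _i ∈ s, max 1 E :=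
        Finset.prod_le_prod (fun i _ => abs_nonneg _)
          (fun i hi => (h i hi).trans (le_max_right 1 E))
    _ = (max 1 E) ^ s.card := by rw [Finset.prod_const]
    _ ≤ (max 1 E) ^ n := pow_le_pow_right₀ (le_max_left 1 E) hcard

def pdens (t : ℕ) (χ ν : Measure X) (q : X → X → ℝ) (g : ℕ → X → ℝ)
    [IsProbabilityMeasure χ] [IsFiniteMeasure ν] (u : ℕ) : (Fin (t + 1) → X) → ℝ :=
  fun x => kk χ ν q g u (x ((u : ℕ) : Fin (t + 1))) *
    ∏ i ∈ Finset.univ.filter (fun i : Fin t => u ≤ (i : ℕ)),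
      (q (x i.castSucc) (x i.succ) * g ((i : ℕ) + 1) (x i.succ))

section PdensPart

variable [IsProbabilityMeasure χ] [IsFiniteMeasure ν]

lemma pdens_zero (t : ℕ) : pdens t χ ν q g 0 = jointDens t q g := by
  funext x
  unfold pdens jointDens
  rw [Finset.filter_true_of_mem (fun i _ => Nat.zero_le _)]
  simp [kk]

lemma pdens_last (t : ℕ) (x : Fin (t + 1) → X) :
    pdens t χ ν q g t x = kk χ ν q g t (x ((t : ℕ) : Fin (t + 1))) := by
  unfold pdens
  rw [Finset.filter_false_of_mem (fun i _ => not_le.mpr i.isLt), Finset.prod_empty, mul_one]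

lemma filter_split (t u : ℕ) (hu : u < t) :
    Finset.univ.filter (fun i : Fin t => u ≤ (i : ℕ))
      = insert ⟨u, hu⟩ (Finset.univ.filter (fun i : Fin t => u + 1 ≤ (i : ℕ))) := by
  ext i
  simp only [Finset.mem_filter, Finset.mem_univ, true_and, Finset.mem_insert, Fin.ext_iff]
  omega

lemma pdens_update (t u : ℕ) (hu : u + 1 ≤ t) (x : Fin (t + 1) → X) (z : X) :
    pdens t χ ν q g u (Function.update x ((u : ℕ) : Fin (t + 1)) z)
      = kk χ ν q g u z *
        ((q z (x ((u + 1 : ℕ) : Fin (t + 1))) * g (u + 1) (x ((u + 1 : ℕ) : Fin (t + 1)))) *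
          ∏ i ∈ Finset.univ.filter (fun i : Fin t => u + 1 ≤ (i : ℕ)),
            (q (x i.castSucc) (x i.succ) * g ((i : ℕ) + 1) (x i.succ))) := by
  have hvu : ((u : ℕ) : Fin (t + 1)).1 = u := Fin.val_cast_of_lt (by omega)
  have hvu1 : ((u + 1 : ℕ) : Fin (t + 1)).1 = u + 1 := Fin.val_cast_of_lt (by omega)
  have hut : u < t := by omega
  have hcs : (⟨u, hut⟩ : Fin t).castSucc = ((u : ℕ) : Fin (t + 1)) := by
    apply Fin.ext; simp [hvu]
  have hsc : (⟨u, hut⟩ : Fin t).succ = ((u + 1 : ℕ) : Fin (t + 1)) := by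
    apply Fin.ext; rw [Fin.val_succ, hvu1]
  have hne1 : ((u + 1 : ℕ) : Fin (t + 1)) ≠ ((u : ℕ) : Fin (t + 1)) := by
    intro hc
    rw [Fin.ext_iff, hvu, hvu1] at hc
    omega
  unfold pdens
  rw [filter_split t u hut, Finset.prod_insert (by simp)]
  rw [hcs, hsc, Function.update_self, Function.update_of_ne hne1]
  congr 1
  congr 1
  refine Finset.prod_congr rfl fun i hi => ?_
  simp only [Finset.mem_filter] at hi
  have h2 : i.castSucc ≠ ((u : ℕ) : Fin (t + 1)) := by
    intro hc
    rw [Fin.ext_iff, Fin.coe_castSucc, hvu] at hc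
    omega
  have h3 : i.succ ≠ ((u : ℕ) : Fin (t + 1)) := by
    intro hc
    rw [Fin.ext_iff, Fin.val_succ, hvu] at hc
    omega
  rw [Function.update_of_ne h2, Function.update_of_ne h3]

lemma Mcast (χ ν : Measure X) (t u : ℕ) (hu : u ≤ t) :
    (if ((u : ℕ) : Fin (t + 1)) = 0 then χ else ν) = mm χ ν u := by
  have hv : ((u : ℕ) : Fin (t + 1)).1 = u := Fin.val_cast_of_lt (by omega)
  unfold mm
  rcases Nat.eq_zero_or_pos u with h | h
  · subst h; simp
  · rw [if_neg (by omega : ¬u = 0), if_neg ?_]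
    intro hc
    rw [hc] at hv
    simp only [Fin.val_zero] at hv
    omega

instance baseMeas_finite (t : ℕ) : IsFiniteMeasure (baseMeas t χ ν) := by
  unfold baseMeas
  haveI : ∀ i : Fin (t + 1), IsFiniteMeasure ((fun i : Fin (t + 1) => if i = 0 then χ else ν) i) :=
    fun i => by dsimp only; split <;> infer_instance
  infer_instance

variable (H : Hyp χ ν q εlo εhi g δlo δhi)
include H

lemma Hyp.pdens_prop (t u : ℕ) : Measurable (pdens t χ ν q g u) ∧
    ∃ c, ∀ x, |pdens t χ ν q g u x| ≤ c := by
  obtain ⟨hkm, a, b, ha, hab⟩ := H.kk_prop u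
  have hkabs : ∀ z, |kk χ ν q g u z| ≤ b := fun z => by
    rw [abs_of_pos (lt_of_lt_of_le ha (hab z).1)]; exact (hab z).2
  constructor
  · refine (hkm.comp (measurable_pi_apply _)).mul (Finset.measurable_prod _ fun i _ => ?_)
    exact (H.hq.comp ((measurable_pi_apply i.castSucc).prodMk (measurable_pi_apply i.succ))).mul
      ((H.hg ((i : ℕ) + 1)).comp (measurable_pi_apply (X := fun _ : Fin (t + 1) => X) i.succ))
  · refine ⟨b * (max 1 (εhi * δhi)) ^ t, fun x => ?_⟩
    refine abs_mul_le' (hkabs _) (abs_prod_le _ _ (εhi * δhi) t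
      (fun i _ => abs_mul_le' (H.qabs _ _) (H.gabs _ _))
      ((Finset.card_filter_le _ _).trans (by simp)))

end PdensPart

section StepPart

variable [IsProbabilityMeasure χ] [IsFiniteMeasure ν]
variable (H : Hyp χ ν q εlo εhi g δlo δhi)
include H

lemma Hyp.step (t : ℕ) (f : (Fin (t + 1) → X) → ℝ) (hf : Measurable f) {C : ℝ}
    (hC : ∀ x, |f x| ≤ C) (u : ℕ) (hu : u + 1 ≤ t) :
    ((mm χ ν u) Set.univ).toReal *
      ∫ x, Jfun t q (filt0 χ ν q g) f u x * pdens t χ ν q g u x ∂(baseMeas t χ ν)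
    = ∫ x, Jfun t q (filt0 χ ν q g) f (u + 1) x * pdens t χ ν q g (u + 1) x
        ∂(baseMeas t χ ν) := by
  haveI hMfin : ∀ i : Fin (t + 1),
      IsFiniteMeasure ((fun i : Fin (t + 1) => if i = 0 then χ else ν) i) :=
    fun i => by dsimp only; split <;> infer_instance
  obtain ⟨hJm, hJb⟩ := H.J_prop t f hf hC u
  obtain ⟨hpm, c, hpb⟩ := H.pdens_prop t u
  have key := integral_update_pi (μ := fun i : Fin (t + 1) => if i = 0 then χ else ν)
    ((u : ℕ) : Fin (t + 1))
    (G := fun x => Jfun t q (filt0 χ ν q g) f u x * pdens t χ ν q g u x)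
    (hJm.mul hpm) (fun x => abs_mul_le' (hJb x) (hpb x))
  rw [Mcast χ ν t u (by omega)] at key
  have hbase : baseMeas t χ ν = Measure.pi (fun i : Fin (t + 1) => if i = 0 then χ else ν) := rfl
  rw [hbase, ← key]
  congr 1
  funext x
  have hrepr := H.J_succ_repr t f u hJm hJb
  have hDne : (∫ z, q z (x ((u + 1 : ℕ) : Fin (t + 1))) * kk χ ν q g u z ∂(mm χ ν u)) ≠ 0 :=
    ne_of_gt (H.qkk_pos u _)
  calc ∫ z, (fun x => Jfun t q (filt0 χ ν q g) f u x * pdens t χ ν q g u x)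
        (Function.update x ((u : ℕ) : Fin (t + 1)) z) ∂(mm χ ν u)
      = ∫ z, (g (u + 1) (x ((u + 1 : ℕ) : Fin (t + 1))) *
            ∏ i ∈ Finset.univ.filter (fun i : Fin t => u + 1 ≤ (i : ℕ)),
              (q (x i.castSucc) (x i.succ) * g ((i : ℕ) + 1) (x i.succ))) *
          (Jfun t q (filt0 χ ν q g) f u (Function.update x ((u : ℕ) : Fin (t + 1)) z) *
            q z (x ((u + 1 : ℕ) : Fin (t + 1))) * kk χ ν q g u z) ∂(mm χ ν u) := by
        congr 1; funext z
        dsimp only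
        rw [pdens_update t u hu x z]
        ring
    _ = (g (u + 1) (x ((u + 1 : ℕ) : Fin (t + 1))) *
            ∏ i ∈ Finset.univ.filter (fun i : Fin t => u + 1 ≤ (i : ℕ)),
              (q (x i.castSucc) (x i.succ) * g ((i : ℕ) + 1) (x i.succ))) *
          ∫ z, Jfun t q (filt0 χ ν q g) f u (Function.update x ((u : ℕ) : Fin (t + 1)) z) *
            q z (x ((u + 1 : ℕ) : Fin (t + 1))) * kk χ ν q g u z ∂(mm χ ν u) := by
        rw [integral_const_mul]
    _ = (g (u + 1) (x ((u + 1 : ℕ) : Fin (t + 1))) *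
            ∏ i ∈ Finset.univ.filter (fun i : Fin t => u + 1 ≤ (i : ℕ)),
              (q (x i.castSucc) (x i.succ) * g ((i : ℕ) + 1) (x i.succ))) *
          (Jfun t q (filt0 χ ν q g) f (u + 1) x *
            ∫ z, q z (x ((u + 1 : ℕ) : Fin (t + 1))) * kk χ ν q g u z ∂(mm χ ν u)) := by
        rw [hrepr]
        dsimp only
        rw [div_mul_cancel₀ _ hDne]
    _ = Jfun t q (filt0 χ ν q g) f (u + 1) x * pdens t χ ν q g (u + 1) x := by
        have hp : pdens t χ ν q g (u + 1) x
            = kk χ ν q g (u + 1) (x ((u + 1 : ℕ) : Fin (t + 1))) *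
              ∏ i ∈ Finset.univ.filter (fun i : Fin t => u + 1 ≤ (i : ℕ)),
                (q (x i.castSucc) (x i.succ) * g ((i : ℕ) + 1) (x i.succ)) := rfl
        have hk : kk χ ν q g (u + 1) (x ((u + 1 : ℕ) : Fin (t + 1)))
            = g (u + 1) (x ((u + 1 : ℕ) : Fin (t + 1))) *
              ∫ z, kk χ ν q g u z * q z (x ((u + 1 : ℕ) : Fin (t + 1))) ∂(mm χ ν u) := rfl
        have hcomm : ∫ z, q z (x ((u + 1 : ℕ) : Fin (t + 1))) * kk χ ν q g u z ∂(mm χ ν u)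
            = ∫ z, kk χ ν q g u z * q z (x ((u + 1 : ℕ) : Fin (t + 1))) ∂(mm χ ν u) := by
          congr 1; funext z; ring
        rw [hp, hk, hcomm]
        ring

lemma Hyp.chain (t : ℕ) (f : (Fin (t + 1) → X) → ℝ) (hf : Measurable f) {C : ℝ}
    (hC : ∀ x, |f x| ≤ C) :
    ∀ u, u ≤ t →
      ∫ x, Jfun t q (filt0 χ ν q g) f u x * pdens t χ ν q g u x ∂(baseMeas t χ ν)
        = (∏ v ∈ Finset.range u, ((mm χ ν v) Set.univ).toReal) *
            ∫ x, f x * jointDens t q g x ∂(baseMeas t χ ν) := by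
  intro u
  induction u with
  | zero =>
    intro _
    simp only [pdens_zero, Finset.range_zero, Finset.prod_empty, one_mul]
    rfl
  | succ u ih =>
    intro hu
    rw [← H.step t f hf hC u hu, ih (by omega), Finset.prod_range_succ]
    ring

end StepPart


/-- the backward decomposition of the joint smoothing distribution:
`φ_{0:t|t}(f) = ∫ φ_t(dx_t) ∫ B_{φ_{t−1}}(x_t, dx_{t−1}) ⋯ ∫ B_{φ_0}(x_1, dx_0) f(x_0,…,x_t)`. -/
theorem stmt14 (t : ℕ)
    (χ : Measure X) [IsProbabilityMeasure χ]
    (ν : Measure X) [IsFiniteMeasure ν] (hν : ν ≠ 0)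
    (q : X → X → ℝ) (hq : Measurable (Function.uncurry q))
    (εlo εhi : ℝ) (hεlo : 0 < εlo) (hεhi : εlo ≤ εhi)
    (hqb : ∀ x x', q x x' ∈ Set.Icc εlo εhi)
    (g : ℕ → X → ℝ) (hg : ∀ u, Measurable (g u))
    (δlo δhi : ℝ) (hδlo : 0 < δlo) (hδ : δlo ≤ δhi)
    (hgb : ∀ u x, g u x ∈ Set.Icc δlo δhi)
    (f : (Fin (t + 1) → X) → ℝ) (hf : Measurable f) (C : ℝ) (hfb : ∀ x, |f x| ≤ C) :
    (∫ x, f x * jointDens t q g x ∂(baseMeas t χ ν)) /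
        (∫ x, jointDens t q g x ∂(baseMeas t χ ν)) =
      filt0 χ ν q g t (fun z => Jfun t q (filt0 χ ν q g) f t (fun _ => z)) := by
  have H : Hyp χ ν q εlo εhi g δlo δhi := ⟨hν, hq, hεlo, hqb, hg, hδlo, hgb⟩
  haveI hMfin : ∀ i : Fin (t + 1),
      IsFiniteMeasure ((fun i : Fin (t + 1) => if i = 0 then χ else ν) i) :=
    fun i => by dsimp only; split <;> infer_instance
  have hvt : ((t : ℕ) : Fin (t + 1)).1 = t := Fin.val_cast_of_lt (by omega)
  have h1 := H.chain t f hf hfb t le_rfl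
  have hone : ∀ x : Fin (t + 1) → X, |(fun _ : Fin (t + 1) → X => (1 : ℝ)) x| ≤ 1 :=
    fun x => by norm_num
  have h2 := H.chain t (fun _ => (1 : ℝ)) measurable_const hone t le_rfl
  rw [H.J_one t t le_rfl] at h2
  simp only [one_mul] at h2
  set cP := ∏ v ∈ Finset.range t, ((mm χ ν v) Set.univ).toReal with hcP
  have hcPpos : 0 < cP := Finset.prod_pos fun v _ => H.mass_pos v
  have hJdep : ∀ x : Fin (t + 1) → X, Jfun t q (filt0 χ ν q g) f t x
      = Jfun t q (filt0 χ ν q g) f t (fun _ => x ((t : ℕ) : Fin (t + 1))) := by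
    intro x
    refine Jfun_congr t q (filt0 χ ν q g) f t le_rfl x _ fun j hj => ?_
    have hjt : j = ((t : ℕ) : Fin (t + 1)) := by
      have := j.isLt
      exact Fin.ext (by omega)
    rw [hjt]
  obtain ⟨hJm, hJb⟩ := H.J_prop t f hf hfb t
  set Jc : X → ℝ := fun z => Jfun t q (filt0 χ ν q g) f t (fun _ => z) with hJc
  have hJcm : Measurable Jc := hJm.comp (measurable_pi_lambda _ fun _ => measurable_id)
  have hJcb : ∀ z, |Jc z| ≤ C := fun z => hJb _
  obtain ⟨hkm, a, b, ha, hab⟩ := H.kk_prop t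
  have hkabs : ∀ z, |kk χ ν q g t z| ≤ b := fun z => by
    rw [abs_of_pos (lt_of_lt_of_le ha (hab z).1)]; exact (hab z).2
  have hnum : ∫ x, Jfun t q (filt0 χ ν q g) f t x * pdens t χ ν q g t x ∂(baseMeas t χ ν)
      = ∫ x, (fun z => Jc z * kk χ ν q g t z) (x ((t : ℕ) : Fin (t + 1))) ∂(baseMeas t χ ν) := by
    congr 1; funext x
    dsimp only
    rw [pdens_last t x, hJdep x]
  have hden : ∫ x, pdens t χ ν q g t x ∂(baseMeas t χ ν)
      = ∫ x, (fun z => kk χ ν q g t z) (x ((t : ℕ) : Fin (t + 1))) ∂(baseMeas t χ ν) := by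
    congr 1; funext x
    dsimp only
    rw [pdens_last t x]
  have hA := integral_apply_pi (μ := fun i : Fin (t + 1) => if i = 0 then χ else ν)
    ((t : ℕ) : Fin (t + 1)) (F := fun z => Jc z * kk χ ν q g t z)
    (hJcm.mul hkm) (fun z => abs_mul_le' (hJcb z) (hkabs z))
  have hB := integral_apply_pi (μ := fun i : Fin (t + 1) => if i = 0 then χ else ν)
    ((t : ℕ) : Fin (t + 1)) (F := fun z => kk χ ν q g t z) hkm hkabs
  rw [Mcast χ ν t t le_rfl] at hA hB
  have hbase : baseMeas t χ ν = Measure.pi (fun i : Fin (t + 1) => if i = 0 then χ else ν) := rfl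
  rw [← hbase] at hA hB
  set mt := ((mm χ ν t) Set.univ).toReal with hmt0
  set T := ((baseMeas t χ ν) Set.univ).toReal with hT
  have hmt : 0 < mt := H.mass_pos t
  have hTpos : 0 < T := by
    rw [hT]
    refine ENNReal.toReal_pos ?_ (measure_ne_top _ _)
    rw [hbase, Measure.pi_univ]
    refine Finset.prod_ne_zero_iff.2 fun i _ => ?_
    refine Measure.measure_univ_ne_zero.2 ?_
    split
    · exact IsProbabilityMeasure.ne_zero χ
    · exact H.hν
  calc (∫ x, f x * jointDens t q g x ∂(baseMeas t χ ν)) /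
        (∫ x, jointDens t q g x ∂(baseMeas t χ ν))
      = (cP * ∫ x, f x * jointDens t q g x ∂(baseMeas t χ ν)) /
        (cP * ∫ x, jointDens t q g x ∂(baseMeas t χ ν)) :=
        (mul_div_mul_left _ _ (ne_of_gt hcPpos)).symm
    _ = (∫ x, Jfun t q (filt0 χ ν q g) f t x * pdens t χ ν q g t x ∂(baseMeas t χ ν)) /
        (∫ x, pdens t χ ν q g t x ∂(baseMeas t χ ν)) := by rw [h1, h2]
    _ = (mt * ∫ x, (fun z => Jc z * kk χ ν q g t z) (x ((t : ℕ) : Fin (t + 1)))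
          ∂(baseMeas t χ ν)) /
        (mt * ∫ x, (fun z => kk χ ν q g t z) (x ((t : ℕ) : Fin (t + 1))) ∂(baseMeas t χ ν)) := by
        rw [hnum, hden, mul_div_mul_left _ _ (ne_of_gt hmt)]
    _ = (T * ∫ z, Jc z * kk χ ν q g t z ∂(mm χ ν t)) /
        (T * ∫ z, kk χ ν q g t z ∂(mm χ ν t)) := by rw [hA, hB]
    _ = (∫ z, Jc z * kk χ ν q g t z ∂(mm χ ν t)) / (∫ z, kk χ ν q g t z ∂(mm χ ν t)) :=
        mul_div_mul_left _ _ (ne_of_gt hTpos)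
    _ = filt0 χ ν q g t Jc := (H.filt_repr t Jc hJcm ⟨C, hJcb⟩).symm

end
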